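/- arXiv:1912.08015 — 6 statements merged into one kernel-verified Lean document; each statement's English description precedes it below -/
import Mathlib

section
/- Let λ ∈ ℝ and Δt > 0 satisfy 2πΔt|λ| < 1, let k ∈ ℕ, and set z := 2πiλΔt. Then for every integer p ≥ 1, |e^{zp} − T_k(z)^p| ≤ (1 + e/(k+1)!)^p − 1. (Equivalently, for a unit vector E ∈ ℂⁿ, the exact ODE iterate x(t_p) = e^{2πiλ p Δt} E and the truncated-Taylor iterate x_{p,0} = T_k(2πiλΔt)^p E satisfy ‖x(t_p) − x_{p,0}‖₂ ≤ (1 + e/(k+1)!)^p − 1.) -/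
open Finset

lemma pow_sub_pow_abs_le (a b : ℂ) (δ : ℝ) (ha : ‖a‖ = 1)
    (hab : ‖a - b‖ ≤ δ) (p : ℕ) :
    ‖a ^ p - b ^ p‖ ≤ (1 + δ) ^ p - 1 := by
  have hδ : 0 ≤ δ := le_trans (norm_nonneg _) hab
  have hb : ‖b‖ ≤ 1 + δ := by
    calc ‖b‖ = ‖a + (b - a)‖ := by congr 1; ring
    _ ≤ ‖a‖ + ‖b - a‖ := norm_add_le _ _
    _ = 1 + ‖a - b‖ := by rw [ha, norm_sub_rev]
    _ ≤ 1 + δ := by linarith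
  induction p with
  | zero => simp
  | succ n ih =>
    have key : a ^ (n+1) - b ^ (n+1) = a * (a ^ n - b ^ n) + (a - b) * b ^ n := by ring
    calc ‖a ^ (n+1) - b ^ (n+1)‖
        ≤ ‖a * (a ^ n - b ^ n)‖ + ‖(a - b) * b ^ n‖ := by
          rw [key]; exact norm_add_le _ _
      _ = ‖a ^ n - b ^ n‖ + ‖a - b‖ * ‖b‖ ^ n := by
          rw [norm_mul, norm_mul, ha, one_mul, norm_pow]
      _ ≤ ((1 + δ) ^ n - 1) + δ * (1 + δ) ^ n := by gcongr
      _ = (1 + δ) ^ (n+1) - 1 := by ring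

/-- Let `λ ∈ ℝ`, `Δt > 0` with `2πΔt|λ| < 1`, `k ∈ ℕ`, `z = 2πiλΔt`.  Then for every `p ≥ 1`,
`|e^{zp} − T_k(z)^p| ≤ (1 + e/(k+1)!)^p − 1`, where `T_k` is the degree-`k` Taylor truncation
of the exponential. -/
theorem exp_iterate_sub_taylor_iterate_le (lam Δt : ℝ) (hΔt : 0 < Δt)
    (hsmall : 2 * Real.pi * Δt * |lam| < 1) (k : ℕ)
    (z : ℂ) (hz : z = 2 * Real.pi * Complex.I * lam * Δt)
    (p : ℕ) (hp : 1 ≤ p) :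
    ‖Complex.exp (z * p) -
        (∑ j ∈ Finset.range (k + 1), z ^ j / (j.factorial : ℂ)) ^ p‖ ≤
      (1 + Real.exp 1 / ((k + 1).factorial : ℝ)) ^ p - 1 := by
  have hzI : z = ((2 * Real.pi * lam * Δt : ℝ) : ℂ) * Complex.I := by
    rw [hz]; push_cast; ring
  have habs : ‖z‖ ≤ 1 := by
    rw [hzI, norm_mul, Complex.norm_I, mul_one, Complex.norm_real, Real.norm_eq_abs]
    have : |2 * Real.pi * lam * Δt| = 2 * Real.pi * Δt * |lam| := by
      rw [abs_mul, abs_mul, abs_mul, abs_of_nonneg (by norm_num : (0:ℝ) ≤ 2),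
        abs_of_nonneg Real.pi_pos.le, abs_of_pos hΔt]
      ring
    rw [this]; exact hsmall.le
  have ha : ‖Complex.exp z‖ = 1 := by
    rw [hzI]; exact Complex.norm_exp_ofReal_mul_I _
  -- remainder bound
  have hF : (0:ℝ) < ((k + 1).factorial : ℝ) := by
    exact_mod_cast Nat.factorial_pos (k + 1)
  have he : (2:ℝ) ≤ Real.exp 1 := by
    have := Real.add_one_le_exp (1:ℝ); linarith
  have hrem : ‖Complex.exp z - ∑ j ∈ Finset.range (k + 1), z ^ j / (j.factorial : ℂ)‖
      ≤ Real.exp 1 / ((k + 1).factorial : ℝ) := by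
    have hb := Complex.exp_bound habs (Nat.succ_pos k)
    refine hb.trans ?_
    have h1 : ‖z‖ ^ k.succ ≤ 1 := pow_le_one₀ (norm_nonneg _) habs
    have hX : (0:ℝ) ≤ ((k.succ.succ : ℝ) * ((k.succ.factorial : ℝ) * (k.succ : ℝ))⁻¹) := by
      positivity
    refine le_trans (mul_le_of_le_one_left hX h1) ?_
    simp only [Nat.succ_eq_add_one]
    push_cast
    rw [← div_eq_mul_inv, div_le_div_iff₀ (by positivity) hF]
    nlinarith [mul_le_mul_of_nonneg_right he
        (by positivity : (0:ℝ) ≤ ((k + 1).factorial : ℝ) * ((k:ℝ) + 1)),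
      mul_nonneg hF.le (Nat.cast_nonneg (α := ℝ) k)]
  have hmain := pow_sub_pow_abs_le (Complex.exp z)
    (∑ j ∈ Finset.range (k + 1), z ^ j / (j.factorial : ℂ))
    (Real.exp 1 / ((k + 1).factorial : ℝ)) ha hrem p
  have hexp : Complex.exp (z * p) = Complex.exp z ^ p := by
    rw [mul_comm, Complex.exp_nat_mul]
  rw [hexp]
  exact hmain
end

section
/- Let λ ∈ ℝ and Δt > 0 satisfy 2πΔt|λ| < 1, let k ∈ ℕ, and set z := 2πiλΔt. Then for every integer p ≥ 1, | |T_k(z)^p| − 1 | ≤ (1 + e/(k+1)!)^p − 1. -/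
open Finset

/-- Let `λ ∈ ℝ`, `Δt > 0` with `2πΔt|λ| < 1`, `k ∈ ℕ`, `z = 2πiλΔt`.  Then for every `p ≥ 1`,
`| |T_k(z)^p| − 1 | ≤ (1 + e/(k+1)!)^p − 1`, where `T_k` is the degree-`k` Taylor truncation
of the exponential. -/
theorem abs_taylor_iterate_sub_one_le (lam Δt : ℝ) (hΔt : 0 < Δt)
    (hsmall : 2 * Real.pi * Δt * |lam| < 1) (k : ℕ)
    (z : ℂ) (hz : z = 2 * Real.pi * Complex.I * lam * Δt)
    (p : ℕ) (hp : 1 ≤ p) :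
    |‖(∑ j ∈ Finset.range (k + 1), z ^ j / (j.factorial : ℂ)) ^ p‖ - 1| ≤
      (1 + Real.exp 1 / ((k + 1).factorial : ℝ)) ^ p - 1 := by
  set T : ℂ := ∑ j ∈ Finset.range (k + 1), z ^ j / (j.factorial : ℂ) with hT
  set δ : ℝ := Real.exp 1 / ((k + 1).factorial : ℝ) with hδ
  have hδ0 : 0 ≤ δ := div_nonneg (Real.exp_pos 1).le (by positivity)
  have hzabs : ‖z‖ = 2 * Real.pi * Δt * |lam| := by
    rw [hz]
    rw [norm_mul, norm_mul, norm_mul]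
    simp [Complex.norm_real, abs_of_pos hΔt, abs_of_pos Real.pi_pos]
    ring
  have hz1 : ‖z‖ ≤ 1 := by rw [hzabs]; exact hsmall.le
  have hre : z.re = 0 := by
    rw [hz]
    simp [Complex.mul_re, Complex.mul_im]
  have hexp1 : ‖Complex.exp z‖ = 1 := by
    rw [Complex.norm_exp, hre, Real.exp_zero]
  -- exp bound
  have hb := Complex.exp_bound hz1 (n := k + 1) (Nat.succ_pos k)
  have hbδ : ‖Complex.exp z - T‖ ≤ δ := by
    refine hb.trans ?_
    rw [hδ]
    have h1 : ‖z‖ ^ (k + 1) ≤ 1 := pow_le_one₀ (norm_nonneg z) hz1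
    have h0 : 0 ≤ ‖z‖ ^ (k + 1) := pow_nonneg (norm_nonneg z) _
    have he2 : (2 : ℝ) ≤ Real.exp 1 := by
      have := Real.add_one_le_exp (1 : ℝ); linarith
    have hfpos : (0 : ℝ) < ((k + 1).factorial : ℝ) := by positivity
    have hkpos : (0 : ℝ) < ((k + 1 : ℕ) : ℝ) := by positivity
    rw [← div_eq_mul_inv, mul_div_assoc', div_le_div_iff₀ (by positivity) hfpos]
    push_cast
    have hA : ‖z‖ ^ (k + 1) * (((k:ℝ) + 1 + 1) * ((k + 1).factorial : ℝ)) ≤ 1 * (((k:ℝ) + 1 + 1) * ((k + 1).factorial : ℝ)) :=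
      mul_le_mul_of_nonneg_right h1 (by positivity)
    have hkF : 0 ≤ (k:ℝ) * ((k + 1).factorial : ℝ) := by positivity
    have hE : 2 * (((k + 1).factorial : ℝ) * ((k:ℝ) + 1)) ≤ Real.exp 1 * (((k + 1).factorial : ℝ) * ((k:ℝ) + 1)) :=
      mul_le_mul_of_nonneg_right he2 (by positivity)
    nlinarith [hA, hkF, hE]
  have key : |‖T‖ - 1| ≤ δ := by
    have := abs_norm_sub_norm_le T (Complex.exp z)
    rw [hexp1] at this
    refine this.trans ?_
    rw [show T - Complex.exp z = -(Complex.exp z - T) by ring, norm_neg]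
    exact hbδ
  set a : ℝ := ‖T‖ with ha
  have ha0 : 0 ≤ a := norm_nonneg T
  rw [norm_pow]
  rw [abs_sub_le_iff]
  have haub : a ≤ 1 + δ := by
    have := abs_le.mp key
    linarith [this.2]
  constructor
  · have : a ^ p ≤ (1 + δ) ^ p := pow_le_pow_left₀ ha0 haub p
    linarith
  · -- 1 - a^p ≤ (1+δ)^p - 1
    have hbern : 1 + (p : ℝ) * δ ≤ (1 + δ) ^ p := by
      have := one_add_mul_le_pow (by linarith : (-2 : ℝ) ≤ δ) p
      linarith
    have hpδ : δ ≤ (p : ℝ) * δ := by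
      nlinarith [(by exact_mod_cast hp : (1:ℝ) ≤ (p:ℝ))]
    by_cases hδ1 : δ ≤ 1
    · have hlb : 1 - δ ≤ a := by
        have := abs_le.mp key
        linarith [this.1]
      have h1 : (1 - δ) ^ p ≤ a ^ p := pow_le_pow_left₀ (by linarith) hlb p
      have h2 : 1 + (p : ℝ) * (-δ) ≤ (1 + -δ) ^ p :=
        one_add_mul_le_pow (by linarith : (-2 : ℝ) ≤ -δ) p
      have h3 : (1 : ℝ) - (p : ℝ) * δ ≤ (1 - δ) ^ p := by
        have : (1 + -δ) ^ p = (1 - δ) ^ p := by ring_nf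
        linarith [h2, this.symm ▸ h2]
      linarith
    · push_neg at hδ1
      have hap : 0 ≤ a ^ p := pow_nonneg ha0 p
      have : (1 : ℝ) ≤ (p : ℝ) * δ := by
        nlinarith [(by exact_mod_cast hp : (1:ℝ) ≤ (p:ℝ))]
      linarith
end

section
/- Let λ ∈ ℝ and Δt > 0 satisfy 2πΔt|λ| < 1, let m ≥ 1 and k ∈ ℕ, set z := 2πiλΔt and A := (1 + e/(k+1)!)^m − 1, and assume A < 1. Define u ∈ ℂ^{m+1} by u_p = e^{zp}/√(m+1) for p = 0,…,m (a unit vector), and let v = w/‖w‖₂ where w ∈ ℂ^{m+1} has entries w_p = T_k(z)^p for p = 0,…,m. Then ‖u − v‖₂ ≤ 2√(m+1) · A · (1 − A)^{−1/2}. -/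
open Finset

lemma aux_pow_sub_pow (a b : ℂ) (δ : ℝ) (hδ : 0 ≤ δ) (hb : ‖b‖ = 1)
    (ha : ‖a‖ ≤ 1 + δ) (hab : ‖a - b‖ ≤ δ) :
    ∀ p : ℕ, ‖a ^ p - b ^ p‖ ≤ (1 + δ) ^ p - 1 := by
  intro p
  induction p with
  | zero => simp
  | succ p ih =>
    have h1 : a ^ (p + 1) - b ^ (p + 1) = a * (a ^ p - b ^ p) + (a - b) * b ^ p := by ring
    have h2 : (0:ℝ) ≤ (1 + δ) ^ p - 1 := by
      have : (1:ℝ) ≤ (1 + δ) ^ p := one_le_pow₀ (by linarith)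
      linarith
    calc ‖a ^ (p + 1) - b ^ (p + 1)‖ ≤ ‖a * (a ^ p - b ^ p)‖ + ‖(a - b) * b ^ p‖ := by
          rw [h1]; exact norm_add_le _ _
      _ = ‖a‖ * ‖a ^ p - b ^ p‖ + ‖a - b‖ * 1 := by
          rw [norm_mul, norm_mul, norm_pow, hb, one_pow]
      _ ≤ (1 + δ) * ((1 + δ) ^ p - 1) + δ * 1 := by gcongr
      _ = (1 + δ) ^ (p + 1) - 1 := by ring

/-- Proposition 2.2 of the paper.  Let `λ ∈ ℝ`, `Δt > 0` with `2πΔt|λ| < 1`, `m ≥ 1`, `k ∈ ℕ`,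
`z = 2πiλΔt`, `A = (1 + e/(k+1)!)^m − 1 < 1`.  Let `u ∈ ℂ^{m+1}` with `u_p = e^{zp}/√(m+1)`
and let `v` be the normalization of `w` with `w_p = T_k(z)^p` (`T_k` the degree-`k` Taylor
truncation of the exponential).  Then `‖u − v‖₂ ≤ 2√(m+1)·A·(1 − A)^{−1/2}`. -/
theorem norm_exact_sub_truncated_superposition_le (lam Δt : ℝ) (hΔt : 0 < Δt)
    (hsmall : 2 * Real.pi * Δt * |lam| < 1) (m k : ℕ) (hm : 1 ≤ m)
    (z : ℂ) (hz : z = 2 * Real.pi * Complex.I * lam * Δt)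
    (A : ℝ) (hA : A = (1 + Real.exp 1 / ((k + 1).factorial : ℝ)) ^ m - 1) (hA1 : A < 1)
    (u w v : EuclideanSpace ℂ (Fin (m + 1)))
    (hu : ∀ p : Fin (m + 1), u p = Complex.exp (z * (p : ℕ)) / (Real.sqrt (m + 1) : ℂ))
    (hw : ∀ p : Fin (m + 1),
      w p = (∑ j ∈ Finset.range (k + 1), z ^ j / (j.factorial : ℂ)) ^ (p : ℕ))
    (hv : v = (‖w‖ : ℂ)⁻¹ • w) :
    ‖u - v‖ ≤ 2 * Real.sqrt (m + 1) * A / Real.sqrt (1 - A) := by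
  set δ : ℝ := Real.exp 1 / ((k + 1).factorial : ℝ) with hδdef
  set T : ℂ := ∑ j ∈ Finset.range (k + 1), z ^ j / (j.factorial : ℂ) with hT
  have hδ0 : 0 ≤ δ := by positivity
  have hA0 : 0 ≤ A := by
    rw [hA]
    have : (1:ℝ) ≤ (1 + δ) ^ m := one_le_pow₀ (by linarith)
    linarith
  have hzabs : ‖z‖ = 2 * Real.pi * Δt * |lam| := by
    rw [hz]
    simp [Complex.norm_real,
      abs_of_pos Real.pi_pos, abs_of_pos hΔt]
    ring
  have hz1 : ‖z‖ ≤ 1 := by rw [hzabs]; linarith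
  have hzI : z = ((2 * Real.pi * lam * Δt : ℝ) : ℂ) * Complex.I := by
    rw [hz]; push_cast; ring
  have hexp1 : ∀ n : ℕ, ‖Complex.exp (z * n)‖ = 1 := by
    intro n
    rw [Complex.norm_exp]
    have : (z * n).re = 0 := by rw [hzI]; simp
    rw [this, Real.exp_zero]
  have hTb : ‖T - Complex.exp z‖ ≤ δ := by
    rw [norm_sub_rev]
    have h := Complex.exp_bound (n := k + 1) hz1 (by omega)
    refine h.trans ?_
    have hfacpos : (0:ℝ) < ((k+1).factorial : ℝ) := by positivity
    calc ‖z‖ ^ (k+1) * (((k + 1).succ : ℝ) * (((k+1).factorial : ℝ) * ((k+1 : ℕ):ℝ))⁻¹)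
        ≤ 1 * (((k + 1).succ : ℝ) * (((k+1).factorial : ℝ) * ((k+1 : ℕ):ℝ))⁻¹) := by
          apply mul_le_mul_of_nonneg_right (pow_le_one₀ (norm_nonneg z) hz1)
          positivity
      _ ≤ δ := by
          rw [one_mul, mul_inv, hδdef, div_eq_mul_inv]
          have he2 : (((k + 1).succ : ℝ)) * (((k+1:ℕ):ℝ))⁻¹ ≤ Real.exp 1 := by
            have h2e : (2:ℝ) ≤ Real.exp 1 := by
              have := Real.add_one_le_exp (1:ℝ); linarith
            have : (((k + 1).succ : ℝ)) * (((k+1:ℕ):ℝ))⁻¹ ≤ 2 := by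
              rw [mul_inv_le_iff₀ (by positivity)]
              push_cast; linarith
            linarith
          calc (((k + 1).succ : ℝ)) * (((k+1).factorial : ℝ)⁻¹ * (((k+1:ℕ):ℝ))⁻¹)
              = ((((k + 1).succ : ℝ)) * (((k+1:ℕ):ℝ))⁻¹) * ((k+1).factorial : ℝ)⁻¹ := by ring
            _ ≤ Real.exp 1 * ((k+1).factorial : ℝ)⁻¹ := by gcongr
  have hexpz : ‖Complex.exp z‖ = 1 := by simpa using hexp1 1
  have hTnorm : ‖T‖ ≤ 1 + δ := by
    calc ‖T‖ = ‖Complex.exp z + (T - Complex.exp z)‖ := by ring_nf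
      _ ≤ ‖Complex.exp z‖ + ‖T - Complex.exp z‖ := norm_add_le _ _
      _ ≤ 1 + δ := by rw [hexpz]; gcongr
  have hkey : ∀ p : Fin (m + 1), ‖Complex.exp (z * (p:ℕ)) - T ^ (p:ℕ)‖ ≤ A := by
    intro p
    have h1 : Complex.exp (z * (p:ℕ)) = Complex.exp z ^ (p:ℕ) := by
      rw [mul_comm, Complex.exp_nat_mul]
    rw [h1, norm_sub_rev]
    refine (aux_pow_sub_pow T (Complex.exp z) δ hδ0 hexpz hTnorm hTb (p:ℕ)).trans ?_
    rw [hA]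
    have hle : (1 + δ) ^ (p:ℕ) ≤ (1 + δ) ^ m :=
      pow_le_pow_right₀ (by linarith) (Nat.lt_succ_iff.mp p.isLt)
    linarith
  have hs0 : (0:ℝ) < Real.sqrt (m + 1) := Real.sqrt_pos.mpr (by positivity)
  set s : ℝ := Real.sqrt (m + 1) with hs
  have hs2 : s ^ 2 = (m:ℝ) + 1 := Real.sq_sqrt (by positivity)
  set y : EuclideanSpace ℂ (Fin (m + 1)) := ((s:ℂ))⁻¹ • w with hy
  have huy : ‖u - y‖ ≤ A := by
    rw [EuclideanSpace.norm_eq]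
    have hpt : ∀ i : Fin (m+1), ‖(u - y) i‖ ^ 2 ≤ (A / s) ^ 2 := by
      intro i
      have he : (u - y) i = (Complex.exp (z * (i:ℕ)) - T ^ (i:ℕ)) / (s:ℂ) := by
        simp only [hy, PiLp.sub_apply, PiLp.smul_apply, hu i, hw i, smul_eq_mul]
        rw [sub_div, inv_mul_eq_div]
      rw [he, norm_div, Complex.norm_real, Real.norm_eq_abs, abs_of_pos hs0]
      gcongr
      exact hkey i
    calc Real.sqrt (∑ i, ‖(u - y) i‖ ^ 2)
        ≤ Real.sqrt (∑ _i : Fin (m+1), (A / s) ^ 2) :=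
          Real.sqrt_le_sqrt (Finset.sum_le_sum fun i _ => hpt i)
      _ = A := by
          rw [Finset.sum_const, Finset.card_univ, Fintype.card_fin, nsmul_eq_mul,
            div_pow, hs2]
          push_cast
          rw [mul_div_cancel₀ _ (by positivity : ((m:ℝ)+1) ≠ 0)]
          exact Real.sqrt_sq hA0
  have hw0 : w ≠ 0 := by
    intro h
    have h1 := hw 0
    rw [h] at h1
    simp at h1
  have hwpos : 0 < ‖w‖ := norm_pos_iff.mpr hw0
  have hnu : ‖u‖ = 1 := by
    rw [EuclideanSpace.norm_eq]
    have hui : ∀ i : Fin (m+1), ‖u i‖ ^ 2 = 1 / ((m:ℝ)+1) := by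
      intro i
      rw [hu i, norm_div, Complex.norm_real, Real.norm_eq_abs, abs_of_pos hs0, hexp1, div_pow, one_pow, hs2]
    rw [Finset.sum_congr rfl fun i _ => hui i, Finset.sum_const, Finset.card_univ,
      Fintype.card_fin, nsmul_eq_mul]
    push_cast
    rw [mul_one_div, div_self (by positivity : ((m:ℝ)+1) ≠ 0)]
    exact Real.sqrt_one
  have hyn : ‖y‖ = ‖w‖ / s := by
    rw [hy, norm_smul, norm_inv, Complex.norm_real, Real.norm_eq_abs, abs_of_pos hs0, inv_mul_eq_div]
  have hyv : ‖y - v‖ ≤ A := by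
    have h1 : y - v = (((s⁻¹ - ‖w‖⁻¹ : ℝ)) : ℂ) • w := by
      rw [hy, hv, ← sub_smul]; norm_cast
    rw [h1, norm_smul, Complex.norm_real, Real.norm_eq_abs]
    have h2 : |s⁻¹ - ‖w‖⁻¹| * ‖w‖ = |‖w‖ / s - 1| := by
      rw [← abs_of_pos hwpos, ← abs_mul]
      congr 1
      field_simp
      rw [abs_of_pos hwpos]; ring
    rw [h2, ← hyn, ← hnu]
    have h3 : ‖y - u‖ ≤ A := by rw [norm_sub_rev]; exact huy
    exact (abs_norm_sub_norm_le y u).trans h3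
  have hfinal : ‖u - v‖ ≤ 2 * A := by
    calc ‖u - v‖ = ‖(u - y) + (y - v)‖ := by rw [sub_add_sub_cancel]
      _ ≤ ‖u - y‖ + ‖y - v‖ := norm_add_le _ _
      _ ≤ A + A := add_le_add huy hyv
      _ = 2 * A := by ring
  refine hfinal.trans ?_
  have hsq : 0 < Real.sqrt (1 - A) := Real.sqrt_pos.mpr (by linarith)
  rw [le_div_iff₀ hsq]
  have h1 : Real.sqrt (1 - A) ≤ 1 := by
    have h := Real.sqrt_le_sqrt (show (1:ℝ) - A ≤ 1 by linarith)
    rwa [Real.sqrt_one] at h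
  have h2 : 1 ≤ s := by
    have h := Real.sqrt_le_sqrt (show (1:ℝ) ≤ (m:ℝ) + 1 by linarith)
    rwa [Real.sqrt_one] at h
  nlinarith
end

section
/- Let A be an n×n complex matrix and m, k positive integers. If every row and every column of A contains at most s nonzero entries, then every row and every column of the matrix C_{m,k}(A) contains at most s + k + 2 nonzero entries. -/
open Finset Matrix
open scoped Classical

/-- `blockUnit n d i j B` is the `(d+1)n × (d+1)n` block matrix `|i⟩⟨j| ⊗ B`:
the block `B` sits in block-row `i` and block-column `j`, and all other blocks vanish. -/
def blockUnit (n d : ℕ) (i j : ℕ) (B : Matrix (Fin n) (Fin n) ℂ) :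
    Matrix (Fin (d + 1) × Fin n) (Fin (d + 1) × Fin n) ℂ :=
  fun x y => if (x.1 : ℕ) = i ∧ (y.1 : ℕ) = j then B x.2 y.2 else 0

/-- The matrix `C_{m,k}(A)` from the paper:
`C_{m,k}(A) = ∑_{p=0}^{d} |p⟩⟨p| ⊗ I − ∑_{p=0}^{m−1} ∑_{q=1}^{k} |p(k+1)+q⟩⟨p(k+1)+q−1| ⊗ (A/q)
  − ∑_{p=0}^{m−1} ∑_{q=0}^{k} |(p+1)(k+1)⟩⟨p(k+1)+q| ⊗ I`, where `d = m(k+1)`. -/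
noncomputable def Cmk (n m k : ℕ) (A : Matrix (Fin n) (Fin n) ℂ) :
    Matrix (Fin (m * (k + 1) + 1) × Fin n) (Fin (m * (k + 1) + 1) × Fin n) ℂ :=
  (∑ p ∈ Finset.range (m * (k + 1) + 1), blockUnit n (m * (k + 1)) p p 1)
    - ∑ p ∈ Finset.range m, ∑ q ∈ Finset.Icc 1 k,
        blockUnit n (m * (k + 1)) (p * (k + 1) + q) (p * (k + 1) + q - 1) ((q : ℂ)⁻¹ • A)
    - ∑ p ∈ Finset.range m, ∑ q ∈ Finset.range (k + 1),
        blockUnit n (m * (k + 1)) ((p + 1) * (k + 1)) (p * (k + 1) + q) 1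

lemma unique_multiple {k t u v : ℕ} (hu : (k + 1) ∣ u) (hv : (k + 1) ∣ v)
    (h1 : t < u) (h2 : u ≤ t + (k + 1)) (h3 : t < v) (h4 : v ≤ t + (k + 1)) : u = v := by
  rcases le_total u v with h | h
  · have hd := Nat.dvd_sub hv hu
    have := Nat.eq_zero_of_dvd_of_lt hd (by omega)
    omega
  · have hd := Nat.dvd_sub hu hv
    have := Nat.eq_zero_of_dvd_of_lt hd (by omega)
    omega

lemma cmk_cases {n m k : ℕ} {A : Matrix (Fin n) (Fin n) ℂ}
    {x y : Fin (m * (k + 1) + 1) × Fin n} (h : Cmk n m k A x y ≠ 0) :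
    y = x ∨ ((y.1 : ℕ) + 1 = (x.1 : ℕ) ∧ A x.2 y.2 ≠ 0) ∨
      (x.2 = y.2 ∧ (y.1 : ℕ) < (x.1 : ℕ) ∧ (x.1 : ℕ) ≤ (y.1 : ℕ) + (k + 1) ∧
        (k + 1) ∣ (x.1 : ℕ)) := by
  simp only [Cmk, Matrix.sub_apply, Matrix.sum_apply] at h
  have tri : ∀ {a b c : ℂ}, a - b - c ≠ 0 → a ≠ 0 ∨ b ≠ 0 ∨ c ≠ 0 := by
    intro a b c h
    by_contra hc
    push_neg at hc
    simp [hc.1, hc.2.1, hc.2.2] at h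
  rcases tri h with h1 | h2 | h3
  · obtain ⟨p, hp, h1⟩ := Finset.exists_ne_zero_of_sum_ne_zero h1
    simp only [blockUnit] at h1
    split_ifs at h1 with hcond
    · obtain ⟨hx, hy⟩ := hcond
      left
      have hxy2 : x.2 = y.2 := by
        by_contra hne
        rw [Matrix.one_apply_ne hne] at h1
        exact h1 rfl
      exact Prod.ext (Fin.ext (by omega)) hxy2.symm
    · exact absurd rfl h1
  · obtain ⟨p, hp, h2⟩ := Finset.exists_ne_zero_of_sum_ne_zero h2
    obtain ⟨q, hq, h2⟩ := Finset.exists_ne_zero_of_sum_ne_zero h2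
    simp only [blockUnit] at h2
    split_ifs at h2 with hcond
    · obtain ⟨hx, hy⟩ := hcond
      have hq1 : 1 ≤ q := (Finset.mem_Icc.mp hq).1
      right; left
      refine ⟨by omega, fun h0 => h2 ?_⟩
      simp [Matrix.smul_apply, h0]
    · exact absurd rfl h2
  · obtain ⟨p, hp, h3⟩ := Finset.exists_ne_zero_of_sum_ne_zero h3
    obtain ⟨q, hq, h3⟩ := Finset.exists_ne_zero_of_sum_ne_zero h3
    simp only [blockUnit] at h3
    split_ifs at h3 with hcond
    · obtain ⟨hx, hy⟩ := hcond
      have hqk : q < k + 1 := Finset.mem_range.mp hq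
      have hxy2 : x.2 = y.2 := by
        by_contra hne
        rw [Matrix.one_apply_ne hne] at h3
        exact h3 rfl
      right; right
      have hexp : (p + 1) * (k + 1) = p * (k + 1) + (k + 1) := by ring
      refine ⟨hxy2, by omega, by omega, ⟨p + 1, by rw [hx]; ring⟩⟩
    · exact absurd rfl h3

/-- Lemma 2.5 of the paper: if every row and every column of `A` has at most `s` nonzero
entries, then every row and every column of `C_{m,k}(A)` has at most `s + k + 2` nonzero
entries. -/
theorem sparsity_Cmk (n m k s : ℕ) (hm : 0 < m) (hk : 0 < k)
    (A : Matrix (Fin n) (Fin n) ℂ)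
    (hrow : ∀ i : Fin n, (Finset.univ.filter fun j : Fin n => A i j ≠ 0).card ≤ s)
    (hcol : ∀ j : Fin n, (Finset.univ.filter fun i : Fin n => A i j ≠ 0).card ≤ s) :
    (∀ x : Fin (m * (k + 1) + 1) × Fin n,
        (Finset.univ.filter fun y => Cmk n m k A x y ≠ 0).card ≤ s + k + 2) ∧
      (∀ y : Fin (m * (k + 1) + 1) × Fin n,
        (Finset.univ.filter fun x => Cmk n m k A x y ≠ 0).card ≤ s + k + 2) := by
  constructor
  · intro x
    set S1 : Finset (Fin (m * (k + 1) + 1) × Fin n) := {x} with hS1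
    set S2 : Finset (Fin (m * (k + 1) + 1) × Fin n) :=
      Finset.univ.filter (fun y => (y.1 : ℕ) + 1 = (x.1 : ℕ) ∧ A x.2 y.2 ≠ 0) with hS2
    set S3 : Finset (Fin (m * (k + 1) + 1) × Fin n) :=
      Finset.univ.filter
        (fun y => x.2 = y.2 ∧ (y.1 : ℕ) < (x.1 : ℕ) ∧ (x.1 : ℕ) ≤ (y.1 : ℕ) + (k + 1)) with hS3
    have hsub : (Finset.univ.filter fun y => Cmk n m k A x y ≠ 0) ⊆ S1 ∪ S2 ∪ S3 := by
      intro y hy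
      have hy' := (Finset.mem_filter.mp hy).2
      rcases cmk_cases hy' with h1 | h2 | h3
      · refine Finset.mem_union_left _ (Finset.mem_union_left _ ?_)
        rw [hS1, Finset.mem_singleton]; exact h1
      · refine Finset.mem_union_left _ (Finset.mem_union_right _ ?_)
        rw [hS2, Finset.mem_filter]; exact ⟨Finset.mem_univ _, h2⟩
      · refine Finset.mem_union_right _ ?_
        rw [hS3, Finset.mem_filter]
        exact ⟨Finset.mem_univ _, h3.1, h3.2.1, h3.2.2.1⟩
    have hc2 : S2.card ≤ s := by
      have := Finset.card_le_card_of_injOn (fun y => y.2)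
        (s := S2) (t := Finset.univ.filter fun j : Fin n => A x.2 j ≠ 0)
        (fun y hy => by
          simp only [hS2, Finset.mem_coe, Finset.mem_filter, Finset.mem_univ, true_and] at hy ⊢
          exact hy.2)
        (fun a ha b hb hab => by
          simp only [hS2, Finset.mem_coe, Finset.mem_filter, Finset.mem_univ, true_and] at ha hb
          have h1 := ha.1; have h2 := hb.1
          exact Prod.ext (Fin.ext (by omega)) hab)
      exact this.trans (hrow x.2)
    have hc3 : S3.card ≤ k + 1 := by
      have := Finset.card_le_card_of_injOn (fun y => (y.1 : ℕ))
        (s := S3) (t := Finset.Ico ((x.1 : ℕ) - (k + 1)) (x.1 : ℕ))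
        (fun y hy => by
          simp only [hS3, Finset.mem_coe, Finset.mem_filter, Finset.mem_univ, true_and] at hy
          simp only [Finset.mem_coe, Finset.mem_Ico]
          omega)
        (fun a ha b hb hab => by
          simp only [hS3, Finset.mem_coe, Finset.mem_filter, Finset.mem_univ, true_and] at ha hb
          exact Prod.ext (Fin.ext hab) (ha.1.symm.trans hb.1))
      refine this.trans ?_
      rw [Nat.card_Ico]
      omega
    calc (Finset.univ.filter fun y => Cmk n m k A x y ≠ 0).card
        ≤ (S1 ∪ S2 ∪ S3).card := Finset.card_le_card hsub
      _ ≤ (S1 ∪ S2).card + S3.card := Finset.card_union_le _ _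
      _ ≤ S1.card + S2.card + S3.card := by
          exact Nat.add_le_add_right (Finset.card_union_le _ _) _
      _ ≤ 1 + s + (k + 1) := by
          have : S1.card = 1 := Finset.card_singleton x
          omega
      _ = s + k + 2 := by omega
  · intro y
    set S1 : Finset (Fin (m * (k + 1) + 1) × Fin n) := {y} with hS1
    set S2 : Finset (Fin (m * (k + 1) + 1) × Fin n) :=
      Finset.univ.filter (fun x => (y.1 : ℕ) + 1 = (x.1 : ℕ) ∧ A x.2 y.2 ≠ 0) with hS2
    set S3 : Finset (Fin (m * (k + 1) + 1) × Fin n) :=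
      Finset.univ.filter
        (fun x => x.2 = y.2 ∧ (y.1 : ℕ) < (x.1 : ℕ) ∧ (x.1 : ℕ) ≤ (y.1 : ℕ) + (k + 1) ∧
          (k + 1) ∣ (x.1 : ℕ)) with hS3
    have hsub : (Finset.univ.filter fun x => Cmk n m k A x y ≠ 0) ⊆ S1 ∪ S2 ∪ S3 := by
      intro x hx
      have hx' := (Finset.mem_filter.mp hx).2
      rcases cmk_cases hx' with h1 | h2 | h3
      · refine Finset.mem_union_left _ (Finset.mem_union_left _ ?_)
        rw [hS1, Finset.mem_singleton]; exact h1.symm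
      · refine Finset.mem_union_left _ (Finset.mem_union_right _ ?_)
        rw [hS2, Finset.mem_filter]; exact ⟨Finset.mem_univ _, h2⟩
      · refine Finset.mem_union_right _ ?_
        rw [hS3, Finset.mem_filter]; exact ⟨Finset.mem_univ _, h3⟩
    have hc2 : S2.card ≤ s := by
      have := Finset.card_le_card_of_injOn (fun x => x.2)
        (s := S2) (t := Finset.univ.filter fun i : Fin n => A i y.2 ≠ 0)
        (fun x hx => by
          simp only [hS2, Finset.mem_coe, Finset.mem_filter, Finset.mem_univ, true_and] at hx ⊢
          exact hx.2)
        (fun a ha b hb hab => by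
          simp only [hS2, Finset.mem_coe, Finset.mem_filter, Finset.mem_univ, true_and] at ha hb
          have h1 := ha.1; have h2 := hb.1
          exact Prod.ext (Fin.ext (by omega)) hab)
      exact this.trans (hcol y.2)
    have hc3 : S3.card ≤ 1 := by
      apply Finset.card_le_one.mpr
      intro a ha b hb
      simp only [hS3, Finset.mem_filter, Finset.mem_univ, true_and] at ha hb
      refine Prod.ext (Fin.ext ?_) (ha.1.trans hb.1.symm)
      exact unique_multiple ha.2.2.2 hb.2.2.2 ha.2.1 ha.2.2.1 hb.2.1 hb.2.2.1
    calc (Finset.univ.filter fun x => Cmk n m k A x y ≠ 0).card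
        ≤ (S1 ∪ S2 ∪ S3).card := Finset.card_le_card hsub
      _ ≤ (S1 ∪ S2).card + S3.card := Finset.card_union_le _ _
      _ ≤ S1.card + S2.card + S3.card := by
          exact Nat.add_le_add_right (Finset.card_union_le _ _) _
      _ ≤ 1 + s + 1 := by
          have : S1.card = 1 := Finset.card_singleton y
          omega
      _ ≤ s + k + 2 := by omega
end

section
/- Let A be an n×n complex matrix, b ∈ ℂⁿ, and m, k positive integers. Define the block vector x̃ ∈ ℂ^{(m(k+1)+1)n} whose block at index p(k+1)+q (for 0 ≤ p ≤ m−1, 0 ≤ q ≤ k) is (A^q/q!)·T_k(A)^p b and whose block at index m(k+1) is T_k(A)^m b, where T_k(A) = ∑_{j=0}^{k} A^j/j!. Then C_{m,k}(A) x̃ equals the block vector whose block at index 0 is b and whose all other blocks are zero. -/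
open Finset Matrix
open Fin.NatCast

private lemma sum_mulVec' {ι μ ν : Type*} [Fintype ν] (s : Finset ι)
    (M : ι → Matrix μ ν ℂ) (v : ν → ℂ) (r : μ) :
    (∑ i ∈ s, M i).mulVec v r = ∑ i ∈ s, (M i).mulVec v r := by
  simp only [Matrix.mulVec, dotProduct, Matrix.sum_apply, Finset.sum_mul]
  exact Finset.sum_comm


private lemma blockUnit_mulVec (n d i j : ℕ) (hj : j < d + 1)
    (B : Matrix (Fin n) (Fin n) ℂ) (v : Fin (d + 1) × Fin n → ℂ)
    (x : Fin (d + 1)) (r : Fin n) :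
    (blockUnit n d i j B).mulVec v (x, r)
      = if (x : ℕ) = i then B.mulVec (fun s => v ((j : Fin (d + 1)), s)) r else 0 := by
  simp only [Matrix.mulVec, dotProduct, blockUnit, Fintype.sum_prod_type]
  by_cases hx : (x : ℕ) = i
  · simp only [hx, true_and, if_pos]
    rw [Finset.sum_eq_single ((j : Fin (d + 1)))]
    · simp [Fin.val_cast_of_lt hj]
    · intro z _ hz
      have hz' : (z : ℕ) ≠ j := by
        intro h; exact hz (Fin.ext (by rw [h, Fin.val_cast_of_lt hj]))
      simp [hz']
    · simp
  · simp [hx]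

private lemma decomp_unique {k p q p' q' : ℕ} (hq : q < k + 1) (hq' : q' < k + 1)
    (h : p * (k + 1) + q = p' * (k + 1) + q') : p = p' ∧ q = q' := by
  have h1 : q = q' := by
    have h2 : (p * (k + 1) + q) % (k + 1) = (p' * (k + 1) + q') % (k + 1) := by rw [h]
    rwa [Nat.mul_add_mod', Nat.mul_add_mod', Nat.mod_eq_of_lt hq, Nat.mod_eq_of_lt hq'] at h2
  subst h1
  exact ⟨Nat.eq_of_mul_eq_mul_right (Nat.succ_pos k) (Nat.add_right_cancel h), rfl⟩

private lemma idx_lt {m k p q : ℕ} (hp : p < m) (hq : q ≤ k) :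
    p * (k + 1) + q < m * (k + 1) + 1 := by
  have h1 : p * (k + 1) + q < p * (k + 1) + (k + 1) :=
    Nat.add_lt_add_left (Nat.lt_succ_of_le hq) _
  have h2 : p * (k + 1) + (k + 1) = (p + 1) * (k + 1) := by ring
  have h3 : (p + 1) * (k + 1) ≤ m * (k + 1) := Nat.mul_le_mul_right _ hp
  exact lt_of_lt_of_le (h2 ▸ h1) (h3.trans (Nat.le_succ _))


/-- `taylorTrunc n k A = T_k(A) = ∑_{j=0}^{k} A^j/j!`, the degree-`k` Taylor truncation of the
matrix exponential. -/
noncomputable def taylorTrunc (n k : ℕ) (A : Matrix (Fin n) (Fin n) ℂ) :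
    Matrix (Fin n) (Fin n) ℂ :=
  ∑ j ∈ Finset.range (k + 1), (j.factorial : ℂ)⁻¹ • A ^ j

/-- Appendix B of the paper: the block vector `x̃` whose block at index `p(k+1)+q`
(`0 ≤ p ≤ m−1`, `0 ≤ q ≤ k`) is `(A^q/q!)·T_k(A)^p b` and whose block at index `m(k+1)` is
`T_k(A)^m b` satisfies `C_{m,k}(A) x̃ = |0…0⟩|b⟩`. -/
theorem Cmk_mulVec_taylor_solution (n m k : ℕ) (hm : 0 < m) (hk : 0 < k)
    (A : Matrix (Fin n) (Fin n) ℂ) (b : Fin n → ℂ)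
    (xt : Fin (m * (k + 1) + 1) × Fin n → ℂ)
    (hx1 : ∀ (x : Fin (m * (k + 1) + 1)) (p q : ℕ), p < m → q < k + 1 →
      (x : ℕ) = p * (k + 1) + q → ∀ r : Fin n,
        xt (x, r) = ((q.factorial : ℂ)⁻¹ •
          (A ^ q * taylorTrunc n k A ^ p)).mulVec b r)
    (hx2 : ∀ x : Fin (m * (k + 1) + 1), (x : ℕ) = m * (k + 1) → ∀ r : Fin n,
        xt (x, r) = (taylorTrunc n k A ^ m).mulVec b r) :
    (Cmk n m k A).mulVec xt = fun y => if (y.1 : ℕ) = 0 then b y.2 else 0 := by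
  classical
  funext y
  obtain ⟨x, r⟩ := y
  have key : (Cmk n m k A).mulVec xt (x, r)
      = xt (x, r)
        - (∑ p ∈ Finset.range m, ∑ q ∈ Finset.Icc 1 k,
            if (x : ℕ) = p * (k + 1) + q then
              ((q : ℂ)⁻¹ • A).mulVec
                (fun s => xt (((p * (k + 1) + q - 1 : ℕ) : Fin (m * (k + 1) + 1)), s)) r
            else 0)
        - (∑ p ∈ Finset.range m, ∑ q ∈ Finset.range (k + 1),
            if (x : ℕ) = (p + 1) * (k + 1) then
              xt (((p * (k + 1) + q : ℕ) : Fin (m * (k + 1) + 1)), r)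
            else 0) := by
    rw [Cmk, Matrix.sub_mulVec, Matrix.sub_mulVec]
    simp only [Pi.sub_apply]
    congr 1
    congr 1
    · -- diagonal part
      rw [sum_mulVec']
      have hterm : ∀ p ∈ Finset.range (m * (k + 1) + 1),
          (blockUnit n (m * (k + 1)) p p 1).mulVec xt (x, r)
            = if (x : ℕ) = p then xt (((p : ℕ) : Fin (m * (k + 1) + 1)), r) else 0 := by
        intro p hp
        rw [blockUnit_mulVec n (m * (k + 1)) p p (Finset.mem_range.mp hp)]
        simp [Matrix.one_mulVec]
      rw [Finset.sum_congr rfl hterm,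
        Finset.sum_ite_eq (Finset.range (m * (k + 1) + 1)) ((x : ℕ))
          (fun p => xt (((p : ℕ) : Fin (m * (k + 1) + 1)), r)),
        if_pos (Finset.mem_range.mpr x.isLt), Fin.cast_val_eq_self]
    · -- L part
      rw [sum_mulVec']
      refine Finset.sum_congr rfl fun p hp => ?_
      rw [sum_mulVec']
      refine Finset.sum_congr rfl fun q hq => ?_
      obtain ⟨hq1, hq2⟩ := Finset.mem_Icc.mp hq
      have hb : p * (k + 1) + q - 1 < m * (k + 1) + 1 :=
        lt_of_le_of_lt (Nat.sub_le _ _) (idx_lt (Finset.mem_range.mp hp) hq2)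
      rw [blockUnit_mulVec n (m * (k + 1)) _ _ hb]
    · -- S part
      rw [sum_mulVec']
      refine Finset.sum_congr rfl fun p hp => ?_
      rw [sum_mulVec']
      refine Finset.sum_congr rfl fun q hq => ?_
      have hb : p * (k + 1) + q < m * (k + 1) + 1 :=
        idx_lt (Finset.mem_range.mp hp) (Nat.lt_succ_iff.mp (Finset.mem_range.mp hq))
      rw [blockUnit_mulVec n (m * (k + 1)) _ _ hb]
      simp [Matrix.one_mulVec]
  rw [key]
  by_cases h0 : (x : ℕ) = 0
  · -- x = 0
    have e1 : xt (x, r) = b r := by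
      have := hx1 x 0 0 hm (Nat.succ_pos k) (by simpa using h0) r
      simpa using this
    have e2 : (∑ p ∈ Finset.range m, ∑ q ∈ Finset.Icc 1 k,
        if (x : ℕ) = p * (k + 1) + q then
          ((q : ℂ)⁻¹ • A).mulVec
            (fun s => xt (((p * (k + 1) + q - 1 : ℕ) : Fin (m * (k + 1) + 1)), s)) r
        else 0) = 0 := by
      refine Finset.sum_eq_zero fun p hp => Finset.sum_eq_zero fun q hq => ?_
      rw [if_neg]
      intro hc
      have hq1 := (Finset.mem_Icc.mp hq).1
      rw [h0] at hc
      exact absurd (Nat.add_eq_zero.mp hc.symm).2 (by omega)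
    have e3 : (∑ p ∈ Finset.range m, ∑ q ∈ Finset.range (k + 1),
        if (x : ℕ) = (p + 1) * (k + 1) then
          xt (((p * (k + 1) + q : ℕ) : Fin (m * (k + 1) + 1)), r)
        else 0) = 0 := by
      refine Finset.sum_eq_zero fun p hp => Finset.sum_eq_zero fun q hq => ?_
      rw [if_neg]
      intro hc
      rw [h0] at hc
      exact Nat.mul_ne_zero (Nat.succ_ne_zero p) (Nat.succ_ne_zero k) hc.symm
    rw [e1, e2, e3, sub_zero, sub_zero, if_pos h0]
  · -- x ≠ 0
    rw [if_neg h0]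
    set N : ℕ := (x : ℕ) with hNdef
    set q0 : ℕ := N % (k + 1) with hq0def
    set p0 : ℕ := N / (k + 1) with hp0def
    have hq0k : q0 < k + 1 := Nat.mod_lt _ (Nat.succ_pos k)
    have hdecomp : N = p0 * (k + 1) + q0 := by
      rw [hp0def, hq0def, Nat.mul_comm]
      exact (Nat.div_add_mod N (k + 1)).symm
    have hN : N < m * (k + 1) + 1 := x.isLt
    by_cases hq00 : q0 = 0
    · -- case (c): N = p0 * (k+1), 1 ≤ p0 ≤ m
      rw [hq00, add_zero] at hdecomp
      have hp0pos : 1 ≤ p0 := by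
        rcases Nat.eq_zero_or_pos p0 with h | h
        · rw [h, zero_mul] at hdecomp; exact absurd hdecomp h0
        · exact h
      have hp0le : p0 ≤ m := by
        refine Nat.le_of_mul_le_mul_right ?_ (Nat.succ_pos k)
        rw [← hdecomp]
        exact Nat.lt_succ_iff.mp hN
      have hsucc : p0 - 1 + 1 = p0 := by omega
      have hp1m : p0 - 1 < m := by omega
      have e1 : xt (x, r) = (taylorTrunc n k A ^ p0).mulVec b r := by
        rcases eq_or_lt_of_le hp0le with heq | hlt
        · rw [heq] at hdecomp ⊢
          exact hx2 x hdecomp r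
        · have := hx1 x p0 0 hlt (Nat.succ_pos k) (by rw [← hdecomp, add_zero]) r
          simpa using this
      have e2 : (∑ p ∈ Finset.range m, ∑ q ∈ Finset.Icc 1 k,
          if (x : ℕ) = p * (k + 1) + q then
            ((q : ℂ)⁻¹ • A).mulVec
              (fun s => xt (((p * (k + 1) + q - 1 : ℕ) : Fin (m * (k + 1) + 1)), s)) r
          else 0) = 0 := by
        refine Finset.sum_eq_zero fun p hp => Finset.sum_eq_zero fun q hq => ?_
        rw [if_neg]
        intro hc
        obtain ⟨hq1, hq2⟩ := Finset.mem_Icc.mp hq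
        have hc' : p * (k + 1) + q = p0 * (k + 1) + 0 := by
          rw [add_zero, ← hdecomp, ← hc]
        have := (decomp_unique (Nat.lt_succ_of_le hq2) (Nat.succ_pos k) hc').2
        omega
      have e3 : (∑ p ∈ Finset.range m, ∑ q ∈ Finset.range (k + 1),
          if (x : ℕ) = (p + 1) * (k + 1) then
            xt (((p * (k + 1) + q : ℕ) : Fin (m * (k + 1) + 1)), r)
          else 0) = (taylorTrunc n k A ^ p0).mulVec b r := by
        rw [Finset.sum_eq_single (p0 - 1)]
        · have hcond : (x : ℕ) = (p0 - 1 + 1) * (k + 1) := by rw [hsucc, ← hdecomp]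
          simp only [hcond, if_pos]
          have hterm : ∀ q ∈ Finset.range (k + 1),
              xt ((((p0 - 1) * (k + 1) + q : ℕ) : Fin (m * (k + 1) + 1)), r)
                = ((q.factorial : ℂ)⁻¹ •
                    (A ^ q * taylorTrunc n k A ^ (p0 - 1))).mulVec b r := by
            intro q hq
            have hqk : q < k + 1 := Finset.mem_range.mp hq
            have hb : (p0 - 1) * (k + 1) + q < m * (k + 1) + 1 :=
              idx_lt hp1m (Nat.lt_succ_iff.mp hqk)
            exact hx1 _ (p0 - 1) q hp1m hqk (Fin.val_cast_of_lt hb) r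
          rw [Finset.sum_congr rfl hterm, ← sum_mulVec']
          congr 1
          have : ∑ q ∈ Finset.range (k + 1),
              (q.factorial : ℂ)⁻¹ • (A ^ q * taylorTrunc n k A ^ (p0 - 1))
              = (∑ q ∈ Finset.range (k + 1), (q.factorial : ℂ)⁻¹ • A ^ q)
                  * taylorTrunc n k A ^ (p0 - 1) := by
            rw [Finset.sum_mul]
            exact Finset.sum_congr rfl fun q _ => (smul_mul_assoc _ _ _).symm
          rw [this, ← taylorTrunc, ← pow_succ', hsucc]
        · intro p hp hne
          refine Finset.sum_eq_zero fun q hq => ?_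
          rw [if_neg]
          intro hc
          have hc' : (p + 1) * (k + 1) + 0 = p0 * (k + 1) + 0 := by
            rw [add_zero, add_zero, ← hdecomp, ← hc]
          have := (decomp_unique (Nat.succ_pos k) (Nat.succ_pos k) hc').1
          omega
        · intro h
          exact absurd (Finset.mem_range.mpr hp1m) h
      rw [e1, e2, e3, sub_zero, sub_self]
    · -- case (b): q0 ≥ 1
      have hq01 : 1 ≤ q0 := Nat.one_le_iff_ne_zero.mpr hq00
      have hp0m : p0 < m := by
        by_contra hge
        push_neg at hge
        have h2 : m * (k + 1) ≤ p0 * (k + 1) := Nat.mul_le_mul_right _ hge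
        have h3 : m * (k + 1) + 1 ≤ N := by
          calc m * (k + 1) + 1 ≤ p0 * (k + 1) + q0 := add_le_add h2 hq01
            _ = N := hdecomp.symm
        exact absurd hN (not_lt.mpr h3)
      have e1 : xt (x, r) = ((q0.factorial : ℂ)⁻¹ •
          (A ^ q0 * taylorTrunc n k A ^ p0)).mulVec b r :=
        hx1 x p0 q0 hp0m hq0k hdecomp r
      have e2 : (∑ p ∈ Finset.range m, ∑ q ∈ Finset.Icc 1 k,
          if (x : ℕ) = p * (k + 1) + q then
            ((q : ℂ)⁻¹ • A).mulVec
              (fun s => xt (((p * (k + 1) + q - 1 : ℕ) : Fin (m * (k + 1) + 1)), s)) r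
          else 0)
          = ((q0.factorial : ℂ)⁻¹ • (A ^ q0 * taylorTrunc n k A ^ p0)).mulVec b r := by
        rw [Finset.sum_eq_single p0]
        · rw [Finset.sum_eq_single q0]
          · rw [if_pos hdecomp]
            have hb : p0 * (k + 1) + q0 - 1 < m * (k + 1) + 1 :=
              lt_of_le_of_lt (Nat.sub_le _ _) (idx_lt hp0m (Nat.lt_succ_iff.mp hq0k))
            have hval : ((p0 * (k + 1) + q0 - 1 : ℕ) : Fin (m * (k + 1) + 1)).val
                = p0 * (k + 1) + (q0 - 1) := by
              rw [Fin.val_cast_of_lt hb, Nat.add_sub_assoc hq01]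
            have hfun : (fun s => xt (((p0 * (k + 1) + q0 - 1 : ℕ) : Fin (m * (k + 1) + 1)), s))
                = ((((q0 - 1).factorial : ℂ)⁻¹ •
                    (A ^ (q0 - 1) * taylorTrunc n k A ^ p0)).mulVec b) := by
              funext s
              exact hx1 _ p0 (q0 - 1) hp0m (by omega) hval s
            rw [hfun, Matrix.mulVec_mulVec]
            congr 1
            rw [smul_mul_smul_comm, ← mul_assoc, ← pow_succ']
            obtain ⟨t, ht⟩ : ∃ t, q0 = t + 1 := ⟨q0 - 1, by omega⟩
            rw [ht]
            simp only [Nat.add_sub_cancel]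
            rw [Nat.factorial_succ]
            push_cast
            rw [mul_inv]
          · intro q hq hne
            rw [if_neg]
            intro hc
            obtain ⟨hq1, hq2⟩ := Finset.mem_Icc.mp hq
            exact hne (decomp_unique (Nat.lt_succ_of_le hq2) hq0k
              (hc.symm.trans hdecomp)).2
          · intro h
            exact absurd (Finset.mem_Icc.mpr ⟨hq01, Nat.lt_succ_iff.mp hq0k⟩) h
        · intro p hp hne
          refine Finset.sum_eq_zero fun q hq => ?_
          rw [if_neg]
          intro hc
          obtain ⟨hq1, hq2⟩ := Finset.mem_Icc.mp hq
          exact hne (decomp_unique (Nat.lt_succ_of_le hq2) hq0k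
            (hc.symm.trans hdecomp)).1
        · intro h
          exact absurd (Finset.mem_range.mpr hp0m) h
      have e3 : (∑ p ∈ Finset.range m, ∑ q ∈ Finset.range (k + 1),
          if (x : ℕ) = (p + 1) * (k + 1) then
            xt (((p * (k + 1) + q : ℕ) : Fin (m * (k + 1) + 1)), r)
          else 0) = 0 := by
        refine Finset.sum_eq_zero fun p hp => Finset.sum_eq_zero fun q hq => ?_
        rw [if_neg]
        intro hc
        have hc' : p0 * (k + 1) + q0 = (p + 1) * (k + 1) + 0 := by
          rw [add_zero, ← hdecomp, ← hc]
        have := (decomp_unique hq0k (Nat.succ_pos k) hc').2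
        omega
      rw [e1, e2, e3, sub_zero, sub_self]
end

section
/- Let m ∈ ℕ and b, c ∈ ℝ with sin(πc) ≠ 0. Then |∑_{l=0}^{m} e^{2πlb}·e^{2πilc}|² ≤ (e^{2πb(m+1)} + 1)² / (4e^{2πb}·sin²(πc)). -/
open Finset

/-- The probability bound from Section 2.5 of the paper: for `m ∈ ℕ` and `b, c ∈ ℝ` with
`sin(πc) ≠ 0`,
`|∑_{l=0}^{m} e^{2πlb}·e^{2πilc}|² ≤ (e^{2πb(m+1)} + 1)² / (4e^{2πb} sin²(πc))`. -/
theorem abs_sq_geom_sum_le (m : ℕ) (b c : ℝ) (h : Real.sin (Real.pi * c) ≠ 0) :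
    (‖∑ l ∈ Finset.range (m + 1),
        (Real.exp (2 * Real.pi * l * b) : ℂ) *
          Complex.exp (2 * Real.pi * Complex.I * (l : ℂ) * (c : ℂ))‖) ^ 2 ≤
      (Real.exp (2 * Real.pi * b * (m + 1)) + 1) ^ 2 /
        (4 * Real.exp (2 * Real.pi * b) * Real.sin (Real.pi * c) ^ 2) := by
  set t := Real.exp (2 * Real.pi * b) with ht
  have ht0 : 0 < t := Real.exp_pos _
  set w : ℂ := Complex.exp (2 * Real.pi * Complex.I * c) with hw
  set z : ℂ := (t : ℂ) * w with hz
  have hsum : ∑ l ∈ Finset.range (m + 1),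
      (Real.exp (2 * Real.pi * l * b) : ℂ) *
        Complex.exp (2 * Real.pi * Complex.I * (l : ℂ) * (c : ℂ))
      = ∑ l ∈ Finset.range (m + 1), z ^ l := by
    refine Finset.sum_congr rfl fun l _ => ?_
    have h1 : Real.exp (2 * Real.pi * l * b) = t ^ l := by
      rw [ht, ← Real.exp_nat_mul]; ring_nf
    have h2 : Complex.exp (2 * Real.pi * Complex.I * (l : ℂ) * (c : ℂ)) = w ^ l := by
      rw [hw, ← Complex.exp_nat_mul]; ring_nf
    rw [h1, h2, hz, mul_pow]; push_cast; ring
  have hwre : w.re = Real.cos (2 * Real.pi * c) := by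
    rw [hw, Complex.exp_re]; simp
  have hwim : w.im = Real.sin (2 * Real.pi * c) := by
    rw [hw, Complex.exp_im]; simp
  have hzre : z.re = t * Real.cos (2 * Real.pi * c) := by
    rw [hz, Complex.mul_re, hwre, hwim]; simp
  have hzim : z.im = t * Real.sin (2 * Real.pi * c) := by
    rw [hz, Complex.mul_im, hwre, hwim]; simp
  have hcos : Real.cos (2 * Real.pi * c) = 1 - 2 * Real.sin (Real.pi * c) ^ 2 := by
    have h1 : 2 * Real.pi * c = 2 * (Real.pi * c) := by ring
    rw [h1, Real.cos_two_mul]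
    have := Real.sin_sq_add_cos_sq (Real.pi * c)
    nlinarith
  have hden : 4 * t * Real.sin (Real.pi * c) ^ 2 ≤ ‖z - 1‖ ^ 2 := by
    rw [Complex.sq_norm, Complex.normSq_apply, Complex.sub_re, Complex.sub_im,
      hzre, hzim, hcos]
    have hs := Real.sin_sq_add_cos_sq (2 * Real.pi * c)
    simp only [Complex.one_re, Complex.one_im]
    rw [hcos] at hs
    nlinarith [sq_nonneg (t - 1), mul_pos ht0 ht0, hs, sq_nonneg (Real.sin (2 * Real.pi * c))]
  have hpos : 0 < 4 * t * Real.sin (Real.pi * c) ^ 2 := by positivity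
  have hne : z ≠ 1 := by
    intro he
    rw [he] at hden
    simp at hden
    linarith
  have habsz : ‖z‖ = t := by
    rw [hz, norm_mul, Complex.norm_exp]
    simp [abs_of_pos ht0]
  have hnum : ‖z ^ (m + 1) - 1‖ ≤ Real.exp (2 * Real.pi * b * (m + 1)) + 1 := by
    calc ‖z ^ (m + 1) - 1‖ ≤ ‖z ^ (m + 1)‖ + ‖(1 : ℂ)‖ := by
          exact norm_sub_le (z ^ (m + 1)) (1 : ℂ)
      _ = t ^ (m + 1) + 1 := by rw [norm_pow, habsz, norm_one]
      _ = Real.exp (2 * Real.pi * b * (m + 1)) + 1 := by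
          rw [ht, ← Real.exp_nat_mul]; push_cast; ring_nf
  have hnum2 : ‖z ^ (m + 1) - 1‖ ^ 2 ≤
      (Real.exp (2 * Real.pi * b * (m + 1)) + 1) ^ 2 :=
    pow_le_pow_left₀ (norm_nonneg _) hnum 2
  calc (‖∑ l ∈ Finset.range (m + 1),
        (Real.exp (2 * Real.pi * l * b) : ℂ) *
          Complex.exp (2 * Real.pi * Complex.I * (l : ℂ) * (c : ℂ))‖) ^ 2
      = ‖z ^ (m + 1) - 1‖ ^ 2 / ‖z - 1‖ ^ 2 := by
        rw [hsum, geom_sum_eq hne, norm_div, div_pow]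
    _ ≤ (Real.exp (2 * Real.pi * b * (m + 1)) + 1) ^ 2 /
        (4 * t * Real.sin (Real.pi * c) ^ 2) := by
        apply div_le_div₀ (by positivity) hnum2 hpos hden
end
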